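/- Let X be a separable Banach space, T a bounded linear operator on X, X₀ a dense subset of X, and S : X₀ → X₀ a mapping satisfying T(S(x)) = x for all x ∈ X₀. Let Λ be a relatively compact subset of (a_T(X₀,S), b_T(X₀,S)). Then there exists c > 1 such that for every x ∈ X₀: (i) the series ∑_{n≥0} (λT)^n(x) converges unconditionally, uniformly for λ ∈ Λ; (ii) the series ∑_{n≥0} (S/λ)^n(x) converges unconditionally, uniformly for λ ∈ Λ; (iii) the series ∑_{n≥(c−1)m} (λ/μ)^m (S/μ)^n(x) converges unconditionally, uniformly for m ∈ ℕ and λ, μ ∈ Λ; (iv) the series ∑_{(c−1)m/c ≤ n ≤ m} (λ/μ)^{m−n} (λT)^n(x) converges unconditionally, uniformly for m ∈ ℕ and λ, μ ∈ Λ. -/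

import Mathlib

/-!
Choose reals `s`, `b` with `a_T < s < min Λ̄` and `max Λ̄ < b < b_T`. Then `‖Sⁿx‖ ≤ sⁿ` and
`‖Tⁿx‖ ≤ b⁻ⁿ` for large `n`, so every term is dominated by `θⁿ qⁿ`, where `q` is
`s / min Λ̄` or `max Λ̄ / b` and `θ > 1` is so close to `1` that `θ q < 1`. The extra factor
`(λ/μ)^e` (with `e = m` in (iii), `e = m - n` in (iv)) is at most `(max Λ̄ / min Λ̄)^e ≤ θ^(k e)`
once `θ^k ≥ max Λ̄ / min Λ̄`, and with `c = k + 1` the index ranges of (iii) and (iv) force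
`k e ≤ n`, so that this factor is absorbed by `θⁿ`.
-/

open Filter Topology
open scoped ENNReal NNReal

/-- A family of series `∑_{n ∈ R i} f i n` in a normed space converges unconditionally,
uniformly for `i : ι`. -/
def UnifUncondConv {ι X : Type*} [SeminormedAddCommGroup X]
    (f : ι → ℕ → X) (R : ι → Set ℕ) : Prop :=
  ∀ ε : ℝ, 0 < ε → ∃ N : ℕ, ∀ i : ι, ∀ F : Finset ℕ,
    (∀ n ∈ F, N ≤ n ∧ n ∈ R i) → ‖∑ n ∈ F, f i n‖ < ε

/-- `a_T(X₀,S) = sup_{x ∈ X₀} limsup_n ‖Sⁿx‖^{1/n}`, computed in `ℝ≥0∞`. -/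
noncomputable def aT {X : Type*} [NormedAddCommGroup X] (X₀ : Set X) (S : X₀ → X₀) : ℝ≥0∞ :=
  ⨆ x : X₀, Filter.limsup
    (fun n : ℕ => (‖((S^[n] x : X₀) : X)‖₊ : ℝ≥0∞) ^ (1 / (n : ℝ))) Filter.atTop

/-- `b_T(X₀,S) = inf_{x ∈ X₀} (limsup_n ‖Tⁿx‖^{1/n})⁻¹`, computed in `ℝ≥0∞`. -/
noncomputable def bT {X : Type*} [NormedAddCommGroup X] [NormedSpace ℝ X]
    (T : X →L[ℝ] X) (X₀ : Set X) : ℝ≥0∞ :=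
  ⨅ x : X₀, (Filter.limsup
    (fun n : ℕ => (‖(T ^ n) (x : X)‖₊ : ℝ≥0∞) ^ (1 / (n : ℝ))) Filter.atTop)⁻¹

namespace UnifUncondConv

variable {ι X : Type*} [SeminormedAddCommGroup X] {f : ι → ℕ → X} {R : ι → Set ℕ}

theorem of_isEmpty [IsEmpty ι] : UnifUncondConv f R :=
  fun _ _ => ⟨0, isEmptyElim⟩

theorem mono {R' : ι → Set ℕ} (hf : UnifUncondConv f R) (hR : ∀ i, R' i ⊆ R i) :
    UnifUncondConv f R' := by
  intro ε hε
  obtain ⟨N, hN⟩ := hf ε hε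
  exact ⟨N, fun i F hF => hN i F fun n hn => ⟨(hF n hn).1, hR i (hF n hn).2⟩⟩

theorem of_norm_le_summable {g : ℕ → ℝ} (hg : Summable g) (N₀ : ℕ)
    (hfg : ∀ i n, N₀ ≤ n → n ∈ R i → ‖f i n‖ ≤ g n) : UnifUncondConv f R := by
  intro ε hε
  obtain ⟨s, hs⟩ := summable_iff_vanishing.mp hg _ (Metric.ball_mem_nhds 0 hε)
  obtain ⟨N₁, hsN₁⟩ := s.exists_nat_subset_range
  refine ⟨max N₀ N₁, fun i F hF => ?_⟩
  have hFs : Disjoint F s := Finset.disjoint_left.mpr fun n hnF hns =>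
    (Finset.mem_range.mp (hsN₁ hns)).not_ge ((le_max_right _ _).trans (hF n hnF).1)
  calc ‖∑ n ∈ F, f i n‖ ≤ ∑ n ∈ F, g n :=
        (norm_sum_le _ _).trans <| Finset.sum_le_sum fun n hn =>
          hfg i n ((le_max_left _ _).trans (hF n hn).1) (hF n hn).2
    _ ≤ |∑ n ∈ F, g n| := le_abs_self _
    _ < ε := by simpa using hs F hFs

variable [NormedSpace ℝ X]

theorem pow_mul_pow_smul {α β : ι → ℝ} {e : ι → ℕ → ℕ} {v : ℕ → X} {K B t θ : ℝ} {k : ℕ}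
    (hα : ∀ i, |α i| ≤ K) (hβ : ∀ i, |β i| ≤ B) (hv : ∀ᶠ n in atTop, ‖v n‖ ≤ t ^ n)
    (hK : K ≤ θ ^ k) (hθ : 1 ≤ θ) (hr : |θ * (B * t)| < 1) :
    UnifUncondConv (fun i n => (α i ^ e i n * β i ^ n) • v n) fun i => {n | k * e i n ≤ n} := by
  obtain ⟨N, hN⟩ := eventually_atTop.mp hv
  refine of_norm_le_summable (summable_geometric_of_abs_lt_one hr) N fun i n hn hkn => ?_
  have hαn : |α i| ^ e i n ≤ θ ^ n := calc
    |α i| ^ e i n ≤ (θ ^ k) ^ e i n := pow_le_pow_left₀ (abs_nonneg _) ((hα i).trans hK) _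
    _ = θ ^ (k * e i n) := (pow_mul θ k _).symm
    _ ≤ θ ^ n := pow_le_pow_right₀ hθ hkn
  have hBn : |β i| ^ n ≤ B ^ n := pow_le_pow_left₀ (abs_nonneg _) (hβ i) n
  calc ‖(α i ^ e i n * β i ^ n) • v n‖ = |α i| ^ e i n * |β i| ^ n * ‖v n‖ := by
        rw [norm_smul, norm_mul, norm_pow, norm_pow, Real.norm_eq_abs, Real.norm_eq_abs]
    _ ≤ θ ^ n * B ^ n * t ^ n := by
        have hB : 0 ≤ B := (abs_nonneg _).trans (hβ i)
        gcongr
        exact hN n hn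
    _ = (θ * (B * t)) ^ n := by ring

theorem pow_smul {β : ι → ℝ} {v : ℕ → X} {B t : ℝ} (hβ : ∀ i, |β i| ≤ B)
    (hv : ∀ᶠ n in atTop, ‖v n‖ ≤ t ^ n) (hr : |B * t| < 1) :
    UnifUncondConv (fun i n => β i ^ n • v n) fun _ => Set.univ := by
  simpa using pow_mul_pow_smul (α := 1) (e := 0) (k := 0) (fun _ => abs_one.le) hβ hv
    (pow_zero _).ge le_rfl (by rwa [one_mul])

end UnifUncondConv

section Growth

variable {X : Type*} [NormedAddCommGroup X]

theorem eventually_norm_le_pow_of_limsup_lt {g : ℕ → X} {s : ℝ}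
    (h : limsup (fun n : ℕ => (‖g n‖₊ : ℝ≥0∞) ^ (1 / (n : ℝ))) atTop < ENNReal.ofReal s) :
    ∀ᶠ n in atTop, ‖g n‖ ≤ s ^ n := by
  have hs : 0 ≤ s := by
    by_contra! hs
    simp [ENNReal.ofReal_eq_zero.mpr hs.le] at h
  filter_upwards [eventually_lt_of_limsup_lt h, eventually_gt_atTop 0] with n hn hn0
  rw [one_div, ENNReal.rpow_inv_lt_iff (by positivity), ENNReal.rpow_natCast,
    ← ENNReal.ofReal_pow hs] at hn
  exact ((ENNReal.ofReal_lt_ofReal_iff_of_nonneg (norm_nonneg _)).mp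
    (by rwa [ofReal_norm])).le

theorem eventually_norm_iterate_le_of_aT_lt {X₀ : Set X} {S : X₀ → X₀} {s : ℝ}
    (hs : aT X₀ S < ENNReal.ofReal s) (x : X₀) :
    ∀ᶠ n in atTop, ‖((S^[n] x : X₀) : X)‖ ≤ s ^ n :=
  eventually_norm_le_pow_of_limsup_lt ((le_iSup (fun x : X₀ => limsup
    (fun n : ℕ => (‖((S^[n] x : X₀) : X)‖₊ : ℝ≥0∞) ^ (1 / (n : ℝ))) atTop) x).trans_lt hs)

theorem eventually_norm_pow_apply_le_of_lt_bT [NormedSpace ℝ X] {T : X →L[ℝ] X} {X₀ : Set X}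
    {b : ℝ} (hb : 0 < b) (hbT : ENNReal.ofReal b < bT T X₀) (x : X₀) :
    ∀ᶠ n in atTop, ‖(T ^ n) (x : X)‖ ≤ b⁻¹ ^ n := by
  refine eventually_norm_le_pow_of_limsup_lt ?_
  rw [ENNReal.ofReal_inv_of_pos hb, ENNReal.lt_inv_iff_lt_inv]
  exact hbT.trans_le (iInf_le (fun x : X₀ => (limsup (fun n : ℕ =>
    (‖(T ^ n) (x : X)‖₊ : ℝ≥0∞) ^ (1 / (n : ℝ))) atTop)⁻¹) x)

end Growth

theorem exists_bounds_of_isCompact {K : Set ℝ} {a b : ℝ≥0∞} (hK : IsCompact K)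
    (hne : K.Nonempty) (hab : K ⊆ {l | a < ENNReal.ofReal l ∧ ENNReal.ofReal l < b}) :
    ∃ s m M t : ℝ, 0 ≤ s ∧ s < m ∧ m ≤ M ∧ M < t ∧ K ⊆ Set.Icc m M ∧
      a < ENNReal.ofReal s ∧ ENNReal.ofReal t < b := by
  obtain ⟨s, hs, has, hsm⟩ := ENNReal.lt_iff_exists_real_btwn.mp (hab (hK.sInf_mem hne)).1
  obtain ⟨t, -, hMt, htb⟩ := ENNReal.lt_iff_exists_real_btwn.mp (hab (hK.sSup_mem hne)).2
  exact ⟨s, sInf K, sSup K, t, hs, (ENNReal.ofReal_lt_ofReal_iff'.mp hsm).1,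
    csInf_le_csSup hne hK.bddBelow hK.bddAbove, (ENNReal.ofReal_lt_ofReal_iff'.mp hMt).1,
    fun l hl => ⟨csInf_le hK.bddBelow hl, le_csSup hK.bddAbove hl⟩, has, htb⟩

theorem exists_one_lt_abs_mul_lt_one {q ρ : ℝ} (hq : |q| < 1) (hρ : |ρ| < 1) :
    ∃ θ : ℝ, 1 < θ ∧ |θ * q| < 1 ∧ |θ * ρ| < 1 := by
  set r := max |q| |ρ|
  have hr : r < 1 := max_lt hq hρ
  have hr0 : 0 ≤ r := (abs_nonneg q).trans (le_max_left _ _)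
  have hθr : 2 / (1 + r) * r < 1 := by
    rw [div_mul_eq_mul_div, div_lt_one (by positivity)]
    linarith
  have key : ∀ y : ℝ, |y| ≤ r → |2 / (1 + r) * y| < 1 := fun y hy => by
    rw [abs_mul, abs_of_pos (by positivity)]
    exact (mul_le_mul_of_nonneg_left hy (by positivity)).trans_lt hθr
  exact ⟨2 / (1 + r), (one_lt_div (by positivity)).mpr (by linarith),
    key q (le_max_left _ _), key ρ (le_max_right _ _)⟩

section Icc

variable {Λ : Set ℝ} {m M : ℝ}

theorem abs_le_of_subset_Icc (hΛ : Λ ⊆ Set.Icc m M) (hm : 0 ≤ m) (l : Λ) : |(l : ℝ)| ≤ M := by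
  obtain ⟨hml, hlM⟩ := hΛ l.2
  rwa [abs_of_nonneg (hm.trans hml)]

theorem abs_inv_le_of_subset_Icc (hΛ : Λ ⊆ Set.Icc m M) (hm : 0 < m) (l : Λ) :
    |(l : ℝ)⁻¹| ≤ m⁻¹ := by
  obtain ⟨hml, -⟩ := hΛ l.2
  rw [abs_inv, abs_of_pos (hm.trans_le hml)]
  exact inv_anti₀ hm hml

theorem abs_div_le_of_subset_Icc (hΛ : Λ ⊆ Set.Icc m M) (hm : 0 < m) (l μ : Λ) :
    |(l : ℝ) / μ| ≤ M / m := by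
  rw [abs_div]
  exact div_le_div₀ ((abs_nonneg _).trans (abs_le_of_subset_Icc hΛ hm.le l))
    (abs_le_of_subset_Icc hΛ hm.le l) hm ((hΛ μ.2).1.trans (le_abs_self _))

end Icc

theorem natCast_mul_le_of_sub_one_mul_le {k m n : ℕ} (h : ((k : ℝ) + 1 - 1) * m ≤ n) :
    k * m ≤ n := by
  rw [add_sub_cancel_right] at h
  exact_mod_cast h

theorem mul_sub_le_of_sub_one_div_mul_le {k m n : ℕ}
    (h : ((k : ℝ) + 1 - 1) / ((k : ℝ) + 1) * m ≤ n) : k * (m - n) ≤ n := by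
  rw [add_sub_cancel_right, div_mul_eq_mul_div, div_le_iff₀ (by positivity)] at h
  have h' : k * m ≤ n * (k + 1) := by exact_mod_cast h
  rw [Nat.mul_sub, tsub_le_iff_right]
  linarith

theorem stmt5_general {X : Type*} [NormedAddCommGroup X] [NormedSpace ℝ X]
    (T : X →L[ℝ] X) (X₀ : Set X) (S : X₀ → X₀)
    (Λ : Set ℝ)
    (hcomp : IsCompact (closure Λ))
    (hsub : closure Λ ⊆
      {l : ℝ | aT X₀ S < ENNReal.ofReal l ∧ ENNReal.ofReal l < bT T X₀}) :
    ∃ c : ℝ, 1 < c ∧ ∀ x : X₀,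
      -- (i) ∑_{n≥0} (λT)^n(x), uniformly for λ ∈ Λ
      (UnifUncondConv
        (fun l : Λ => fun n : ℕ => ((l : ℝ) ^ n) • ((T ^ n) (x : X)))
        (fun _ => Set.univ)) ∧
      -- (ii) ∑_{n≥0} (S/λ)^n(x), uniformly for λ ∈ Λ
      (UnifUncondConv
        (fun l : Λ => fun n : ℕ => (((l : ℝ)⁻¹) ^ n) • (((S^[n] x : X₀)) : X))
        (fun _ => Set.univ)) ∧
      -- (iii) ∑_{n ≥ (c−1)m} (λ/μ)^m (S/μ)^n(x), uniformly for m ∈ ℕ, λ, μ ∈ Λ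
      (UnifUncondConv
        (fun v : Λ × Λ × ℕ => fun n : ℕ =>
          ((((v.1 : ℝ) / (v.2.1 : ℝ)) ^ v.2.2 * ((v.2.1 : ℝ)⁻¹) ^ n) •
            (((S^[n] x : X₀)) : X)))
        (fun v => {n : ℕ | (c - 1) * (v.2.2 : ℝ) ≤ (n : ℝ)})) ∧
      -- (iv) ∑_{(c−1)m/c ≤ n ≤ m} (λ/μ)^{m−n} (λT)^n(x), uniformly for m ∈ ℕ, λ, μ ∈ Λ
      (UnifUncondConv
        (fun v : Λ × Λ × ℕ => fun n : ℕ =>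
          ((((v.1 : ℝ) / (v.2.1 : ℝ)) ^ (v.2.2 - n) * (v.1 : ℝ) ^ n) •
            ((T ^ n) (x : X))))
        (fun v => {n : ℕ | (c - 1) / c * (v.2.2 : ℝ) ≤ (n : ℝ) ∧ n ≤ v.2.2})) := by
  rcases Λ.eq_empty_or_nonempty with rfl | hne
  · exact ⟨2, one_lt_two, fun _ => ⟨.of_isEmpty, .of_isEmpty, .of_isEmpty, .of_isEmpty⟩⟩
  obtain ⟨s, m, M, b, hs, hsm, hmM, hMb, hΛ, haS, hbT⟩ :=
    exists_bounds_of_isCompact hcomp hne.closure hsub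
  replace hΛ := subset_closure.trans hΛ
  have hm : 0 < m := hs.trans_lt hsm
  have hb : 0 < b := (hm.trans_le hmM).trans hMb
  have hq : |m⁻¹ * s| < 1 := by
    rwa [abs_of_nonneg (by positivity), inv_mul_lt_one₀ hm]
  have hρ : |M * b⁻¹| < 1 := by
    rwa [abs_of_nonneg (mul_nonneg (hm.le.trans hmM) (by positivity)), ← div_eq_mul_inv,
      div_lt_one hb]
  obtain ⟨θ, hθ, hθq, hθρ⟩ := exists_one_lt_abs_mul_lt_one hq hρ
  obtain ⟨k, hk⟩ := pow_unbounded_of_one_lt (M / m) hθ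
  have hK : M / m ≤ θ ^ (k + 1) := hk.le.trans (pow_le_pow_right₀ hθ.le k.le_succ)
  refine ⟨(k + 1 : ℕ) + 1, lt_add_of_pos_left _ (by positivity), fun x => ?_⟩
  have hSx := eventually_norm_iterate_le_of_aT_lt haS x
  have hTx := eventually_norm_pow_apply_le_of_lt_bT hb hbT x
  have hl := abs_le_of_subset_Icc hΛ hm.le
  have hl_inv := abs_inv_le_of_subset_Icc hΛ hm
  have hl_div := fun v : Λ × Λ × ℕ => abs_div_le_of_subset_Icc hΛ hm v.1 v.2.1
  exact ⟨.pow_smul hl hTx hρ, .pow_smul hl_inv hSx hq,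
    (UnifUncondConv.pow_mul_pow_smul (e := fun v _ => v.2.2) hl_div (hl_inv ·.2.1) hSx hK
      hθ.le hθq).mono fun _ _ => natCast_mul_le_of_sub_one_mul_le,
    (UnifUncondConv.pow_mul_pow_smul (e := fun v n => v.2.2 - n) hl_div (hl ·.1) hTx hK
      hθ.le hθρ).mono fun _ _ hn => mul_sub_le_of_sub_one_div_mul_le hn.1⟩

/-- Lemma 2.12. Here, for `v = (λ, μ, m) : Λ × Λ × ℕ`, `(S/λ)^n` is `λ^{-n} S^n`. -/
theorem stmt5 {X : Type*} [NormedAddCommGroup X] [NormedSpace ℝ X]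
    [CompleteSpace X] [TopologicalSpace.SeparableSpace X]
    (T : X →L[ℝ] X) (X₀ : Set X) (hX₀ : Dense X₀) (S : X₀ → X₀)
    (hTS : ∀ x : X₀, T ((S x : X₀) : X) = (x : X))
    (Λ : Set ℝ)
    (hcomp : IsCompact (closure Λ))
    (hsub : closure Λ ⊆
      {l : ℝ | aT X₀ S < ENNReal.ofReal l ∧ ENNReal.ofReal l < bT T X₀}) :
    ∃ c : ℝ, 1 < c ∧ ∀ x : X₀,
      -- (i) ∑_{n≥0} (λT)^n(x), uniformly for λ ∈ Λ
      (UnifUncondConv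
        (fun l : Λ => fun n : ℕ => ((l : ℝ) ^ n) • ((T ^ n) (x : X)))
        (fun _ => Set.univ)) ∧
      -- (ii) ∑_{n≥0} (S/λ)^n(x), uniformly for λ ∈ Λ
      (UnifUncondConv
        (fun l : Λ => fun n : ℕ => (((l : ℝ)⁻¹) ^ n) • (((S^[n] x : X₀)) : X))
        (fun _ => Set.univ)) ∧
      -- (iii) ∑_{n ≥ (c−1)m} (λ/μ)^m (S/μ)^n(x), uniformly for m ∈ ℕ, λ, μ ∈ Λ
      (UnifUncondConv
        (fun v : Λ × Λ × ℕ => fun n : ℕ =>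
          ((((v.1 : ℝ) / (v.2.1 : ℝ)) ^ v.2.2 * ((v.2.1 : ℝ)⁻¹) ^ n) •
            (((S^[n] x : X₀)) : X)))
        (fun v => {n : ℕ | (c - 1) * (v.2.2 : ℝ) ≤ (n : ℝ)})) ∧
      -- (iv) ∑_{(c−1)m/c ≤ n ≤ m} (λ/μ)^{m−n} (λT)^n(x), uniformly for m ∈ ℕ, λ, μ ∈ Λ
      (UnifUncondConv
        (fun v : Λ × Λ × ℕ => fun n : ℕ =>
          ((((v.1 : ℝ) / (v.2.1 : ℝ)) ^ (v.2.2 - n) * (v.1 : ℝ) ^ n) •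
            ((T ^ n) (x : X))))
        (fun v => {n : ℕ | (c - 1) / c * (v.2.2 : ℝ) ≤ (n : ℝ) ∧ n ≤ v.2.2})) :=
  stmt5_general T X₀ S Λ hcomp hsub
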